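/- arXiv:math/9810187 — 9 statements merged into one kernel-verified Lean document; each statement's English description precedes it below -/
import Mathlib

section
/- Let M be a connected topological space, p ∈ M, and let O, U be nonempty open subsets with M the disjoint union of O, {p}, and U. Then O ∪ {p} and U ∪ {p} are connected subsets of M. -/
private lemma key_aux {M : Type*} [TopologicalSpace M] [ConnectedSpace M] (p : M)
    (O U : Set M) (hO : IsOpen O) (hU : IsOpen U)
    (hdisj : Disjoint O U) (hpO : p ∉ O)
    (hcover : O ∪ {p} ∪ U = Set.univ)
    (u v : Set M) (hu : IsOpen u) (hv : IsOpen v)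
    (hsub : O ∪ {p} ⊆ u ∪ v) (hdis : (O ∪ {p}) ∩ (u ∩ v) = ∅)
    (hpu : p ∈ u) : O ∪ {p} ⊆ u := by
  have hcompl : (O ∩ v)ᶜ = U ∪ u := by
    ext x
    constructor
    · intro hx
      have hx' : x ∈ O ∪ {p} ∪ U := hcover ▸ trivial
      rcases hx' with hx' | hxU
      · rcases hx' with hxO | hxp
        · rcases hsub (Or.inl hxO) with h | h
          · exact Or.inr h
          · exact absurd ⟨hxO, h⟩ hx
        · exact Or.inr ((Set.mem_singleton_iff.mp hxp) ▸ hpu)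
      · exact Or.inl hxU
    · rintro (hxU | hxu) ⟨hxO, hxv⟩
      · exact hdisj.ne_of_mem hxO hxU rfl
      · exact Set.eq_empty_iff_forall_notMem.mp hdis x ⟨Or.inl hxO, hxu, hxv⟩
  have hclopen : IsClopen (O ∩ v) := by
    constructor
    · rw [← isOpen_compl_iff, hcompl]; exact hU.union hu
    · exact hO.inter hv
  rcases isClopen_iff.mp hclopen with hempty | huniv
  · rintro x (hxO | hxp)
    · rcases hsub (Or.inl hxO) with h | h
      · exact h
      · exact absurd (Set.eq_empty_iff_forall_notMem.mp hempty x ⟨hxO, h⟩) (fun h => h)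
    · exact hxp ▸ hpu
  · exact absurd (huniv ▸ Set.mem_univ p : p ∈ O ∩ v).1 hpO

private lemma half {M : Type*} [TopologicalSpace M] [ConnectedSpace M] (p : M)
    (O U : Set M) (hO : IsOpen O) (hU : IsOpen U)
    (hdisj : Disjoint O U) (hpO : p ∉ O)
    (hcover : O ∪ {p} ∪ U = Set.univ) : IsConnected (O ∪ {p}) := by
  refine ⟨⟨p, Or.inr rfl⟩, ?_⟩
  rw [isPreconnected_iff_subset_of_disjoint]
  intro u v hu hv hsub hdis
  rcases hsub (Or.inr rfl : p ∈ O ∪ {p}) with hpu | hpv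
  · exact Or.inl (key_aux p O U hO hU hdisj hpO hcover u v hu hv hsub hdis hpu)
  · refine Or.inr (key_aux p O U hO hU hdisj hpO hcover v u hv hu
      (fun x hx => (hsub hx).elim Or.inr Or.inl) ?_ hpv)
    rw [Set.inter_comm v u]; exact hdis

theorem stmt1 {M : Type*} [TopologicalSpace M] [ConnectedSpace M] (p : M)
    (O U : Set M) (hO : IsOpen O) (hU : IsOpen U)
    (hOne : O.Nonempty) (hUne : U.Nonempty)
    (hdisj : Disjoint O U) (hpO : p ∉ O) (hpU : p ∉ U)
    (hcover : O ∪ {p} ∪ U = Set.univ) :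
    IsConnected (O ∪ {p}) ∧ IsConnected (U ∪ {p}) := by
  have hcover' : U ∪ {p} ∪ O = Set.univ := by
    rw [← hcover]; ext x; simp [Set.mem_union]; tauto
  exact ⟨half p O U hO hU hdisj hpO hcover,
    half p U O hU hO hdisj.symm hpU hcover'⟩
end

section
/- Define a subset Q of a topological space M to be indivisible at a point p if whenever O, U are nonempty open sets with M = O ⊔ {p} ⊔ U, either Q ∩ O = ∅ or Q ∩ U = ∅. If P and Q are subsets of M that are indivisible at every point of M, and P ∩ Q has at least two elements, then P ∪ Q is indivisible at every point of M. -/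
/-- `Q` is indivisible in `M` at the point `p`: whenever `O`, `U` are nonempty open
sets with `M = O ⊔ {p} ⊔ U` (a set-theoretic disjoint union), either `Q ∩ O = ∅`
or `Q ∩ U = ∅`. -/
def IndivisibleAt {M : Type*} [TopologicalSpace M] (Q : Set M) (p : M) : Prop :=
  ∀ O U : Set M, IsOpen O → IsOpen U → O.Nonempty → U.Nonempty →
    Disjoint O U → p ∉ O → p ∉ U → O ∪ {p} ∪ U = Set.univ →
    Q ∩ O = ∅ ∨ Q ∩ U = ∅

theorem stmt2 {M : Type*} [TopologicalSpace M] (P Q : Set M)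
    (hP : ∀ p : M, IndivisibleAt P p) (hQ : ∀ p : M, IndivisibleAt Q p)
    (hcard : ∃ x ∈ P ∩ Q, ∃ y ∈ P ∩ Q, x ≠ y) :
    ∀ p : M, IndivisibleAt (P ∪ Q) p := by
  intro p O U hO hU hOne hUne hdisj hpO hpU hcov
  obtain ⟨x, hx, y, hy, hxy⟩ := hcard
  have hPc := hP p O U hO hU hOne hUne hdisj hpO hpU hcov
  have hQc := hQ p O U hO hU hOne hUne hdisj hpO hpU hcov
  -- helper: if P∩O=∅ and Q∩U=∅ (or symm), P∩Q ⊆ {p}, contradiction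
  have key : ∀ z ∈ P ∩ Q, (P ∩ O = ∅ ∧ Q ∩ U = ∅) ∨ (P ∩ U = ∅ ∧ Q ∩ O = ∅) → z = p := by
    intro z hz h
    have hzM : z ∈ O ∪ {p} ∪ U := hcov ▸ Set.mem_univ z
    rcases hzM with (hzO | hzp) | hzU
    · rcases h with ⟨h1, _⟩ | ⟨_, h2⟩
      · exact absurd (Set.mem_inter hz.1 hzO) (by simp [h1])
      · exact absurd (Set.mem_inter hz.2 hzO) (by simp [h2])
    · exact hzp
    · rcases h with ⟨_, h2⟩ | ⟨h1, _⟩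
      · exact absurd (Set.mem_inter hz.2 hzU) (by simp [h2])
      · exact absurd (Set.mem_inter hz.1 hzU) (by simp [h1])
  rcases hPc with hP1 | hP1 <;> rcases hQc with hQ1 | hQ1
  · left; rw [Set.union_inter_distrib_right, hP1, hQ1, Set.union_empty]
  · exfalso
    exact hxy ((key x hx (Or.inl ⟨hP1, hQ1⟩)).trans (key y hy (Or.inl ⟨hP1, hQ1⟩)).symm)
  · exfalso
    exact hxy ((key x hx (Or.inr ⟨hP1, hQ1⟩)).trans (key y hy (Or.inr ⟨hP1, hQ1⟩)).symm)
  · right; rw [Set.union_inter_distrib_right, hP1, hQ1, Set.union_empty]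
end

section
/- Let M be a topological space and let 𝒬 be a chain (totally ordered by inclusion) of subsets of M, each of which is indivisible in M at every point. Then the union ⋃𝒬 is indivisible in M at every point. -/
theorem stmt3 {M : Type*} [TopologicalSpace M] (𝒬 : Set (Set M))
    (hchain : IsChain (· ⊆ ·) 𝒬)
    (hind : ∀ Q ∈ 𝒬, ∀ p : M, IndivisibleAt Q p) :
    ∀ p : M, IndivisibleAt (⋃₀ 𝒬) p := by
  intro p O U hO hU hOne hUne hdisj hpO hpU hcov
  by_contra h
  push_neg at h
  obtain ⟨h1, h2⟩ := h
  obtain ⟨x, hxQ, hxO⟩ := h1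
  obtain ⟨y, hyQ, hyU⟩ := h2
  obtain ⟨Q1, hQ1, hx1⟩ := hxQ
  obtain ⟨Q2, hQ2, hy2⟩ := hyQ
  rcases hchain.total hQ1 hQ2 with hsub | hsub
  · rcases hind Q2 hQ2 p O U hO hU hOne hUne hdisj hpO hpU hcov with he | he
    · exact absurd he (Set.nonempty_iff_ne_empty.mp ⟨x, hsub hx1, hxO⟩)
    · exact absurd he (Set.nonempty_iff_ne_empty.mp ⟨y, hy2, hyU⟩)
  · rcases hind Q1 hQ1 p O U hO hU hOne hUne hdisj hpO hpU hcov with he | he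
    · exact absurd he (Set.nonempty_iff_ne_empty.mp ⟨x, hx1, hxO⟩)
    · exact absurd he (Set.nonempty_iff_ne_empty.mp ⟨y, hsub hy2, hyU⟩)
end

section
/- Let M be a topological space and Q ⊆ M a subset that is indivisible in M at every point. Then the closure of Q in M is also indivisible at every point. -/
theorem stmt4 {M : Type*} [TopologicalSpace M] (Q : Set M)
    (hQ : ∀ p : M, IndivisibleAt Q p) :
    ∀ p : M, IndivisibleAt (closure Q) p := by
  intro p O U hO hU hOne hUne hdisj hpO hpU hcover
  have key : ∀ V : Set M, IsOpen V → Q ∩ V = ∅ → closure Q ∩ V = ∅ := by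
    intro V hV h
    have hsub : Q ⊆ Vᶜ := by
      intro x hx hxV
      exact Set.eq_empty_iff_forall_notMem.mp h x ⟨hx, hxV⟩
    have : closure Q ⊆ Vᶜ := closure_minimal hsub hV.isClosed_compl
    exact Set.eq_empty_iff_forall_notMem.mpr fun x ⟨hx, hxV⟩ => this hx hxV
  rcases hQ p O U hO hU hOne hUne hdisj hpO hpU hcover with h | h
  · exact Or.inl (key O hO h)
  · exact Or.inr (key U hU h)
end

section
/- Let G be a connected simple graph and let G₁, G₂ be disjoint connected subgraphs. For i = 1, 2, let G'ᵢ denote the graph obtained from G by collapsing Gᵢ to a single vertex. If both G'₁ and G'₂ are 2-vertex connected, then G is 2-vertex connected. -/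
/-- The setoid on the vertex set that identifies all vertices of `S` to one point. -/
def collapseSetoid {V : Type*} (S : Set V) : Setoid V where
  r x y := x = y ∨ (x ∈ S ∧ y ∈ S)
  iseqv := by
    refine ⟨fun x => Or.inl rfl, ?_, ?_⟩
    · rintro x y (rfl | h)
      · exact Or.inl rfl
      · exact Or.inr ⟨h.2, h.1⟩
    · rintro x y z (rfl | h1) h2
      · exact h2
      · rcases h2 with rfl | h2
        · exact Or.inr h1
        · exact Or.inr ⟨h1.1, h2.2⟩

/-- The graph obtained from `G` by collapsing the set `S` of vertices to a single vertex. -/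
def collapse {V : Type*} (G : SimpleGraph V) (S : Set V) :
    SimpleGraph (Quotient (collapseSetoid S)) where
  Adj a b := a ≠ b ∧ ∃ x y : V,
    Quotient.mk (collapseSetoid S) x = a ∧ Quotient.mk (collapseSetoid S) y = b ∧ G.Adj x y
  symm := ⟨by
    rintro a b ⟨hne, x, y, hx, hy, hadj⟩
    exact ⟨hne.symm, y, x, hy, hx, hadj.symm⟩⟩
  loopless := ⟨fun a h => h.1 rfl⟩

/-- A graph is 2-vertex connected if it is connected and removing any single
vertex leaves it connected (no cut vertex). -/
def TwoVertexConnected {V : Type*} (G : SimpleGraph V) : Prop :=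
  G.Connected ∧ ∀ v : V, (G.induce {u : V | u ≠ v}).Connected

/-!
A vertex `v` of `G` avoids one of the two disjoint sets, say `S`. Every fibre of `G - v` over
`collapse G S - [v]` is a single vertex or the connected set `S`, and every edge downstairs comes from
an edge upstairs, so walks in `collapse G S - [v]` lift to walks in `G - v`.
-/
theorem SimpleGraph.Preconnected.of_lift {W X : Type*} {H : SimpleGraph W} {K : SimpleGraph X}
    (hK : K.Preconnected) (f : W → X) (hfib : ∀ x y, f x = f y → H.Reachable x y)
    (hlift : ∀ a b, K.Adj a b → ∃ x y, f x = a ∧ f y = b ∧ H.Adj x y) :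
    H.Preconnected := by
  suffices h : ∀ a b (p : K.Walk a b) x y, f x = a → f y = b → H.Reachable x y from
    fun x y => (hK (f x) (f y)).elim fun p => h _ _ p x y rfl rfl
  intro a b p
  induction p with
  | nil => exact fun x y hx hy => hfib x y (hx.trans hy.symm)
  | cons hab _ ih =>
    intro x z hx hz
    obtain ⟨x', y', hx', hy', hadj⟩ := hlift _ _ hab
    exact ((hfib x x' (hx.trans hx'.symm)).trans hadj.reachable).trans (ih y' z hy' hz)

section collapse

variable {V : Type*} {S : Set V}

theorem collapse_mk_eq_mk_iff {x y : V} :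
    Quotient.mk (collapseSetoid S) x = Quotient.mk (collapseSetoid S) y ↔
      x = y ∨ (x ∈ S ∧ y ∈ S) :=
  Quotient.eq

theorem collapse_mk_eq_mk_iff_of_notMem {x v : V} (hv : v ∉ S) :
    Quotient.mk (collapseSetoid S) x = Quotient.mk (collapseSetoid S) v ↔ x = v := by
  rw [collapse_mk_eq_mk_iff]
  exact ⟨fun h => h.resolve_right fun h => hv h.2, Or.inl⟩

theorem connected_induce_ne_of_collapse (G : SimpleGraph V) (hS : (G.induce S).Connected)
    {v : V} (hv : v ∉ S)
    (hcol : ((collapse G S).induce {a | a ≠ Quotient.mk (collapseSetoid S) v}).Connected) :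
    (G.induce {u | u ≠ v}).Connected := by
  have hne : ∀ {x}, Quotient.mk (collapseSetoid S) x ≠ Quotient.mk (collapseSetoid S) v ↔ x ≠ v :=
    (collapse_mk_eq_mk_iff_of_notMem hv).not
  have hSsub : S ⊆ {u | u ≠ v} := fun u hu h => hv (h ▸ hu)
  obtain ⟨⟨a, ha⟩⟩ := hcol.nonempty
  have : Nonempty ({u | u ≠ v} : Set V) := ⟨⟨a.out, hne.mp (by rwa [Quotient.out_eq])⟩⟩
  refine .mk (hcol.preconnected.of_lift (fun u => ⟨_, hne.mpr u.2⟩) ?_ ?_)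
  · rintro ⟨x, hx⟩ ⟨y, hy⟩ hxy
    rcases collapse_mk_eq_mk_iff.mp (congrArg Subtype.val hxy) with rfl | ⟨hxS, hyS⟩
    · rfl
    · exact (hS.preconnected ⟨x, hxS⟩ ⟨y, hyS⟩).map (G.induceHomOfLE hSsub).toHom
  · rintro ⟨a, ha⟩ ⟨b, hb⟩ ⟨-, x, y, rfl, rfl, hxy⟩
    exact ⟨⟨x, hne.mp ha⟩, ⟨y, hne.mp hb⟩, rfl, rfl, hxy⟩

end collapse

theorem stmt8 {V : Type*} (G : SimpleGraph V) (hG : G.Connected)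
    (S₁ S₂ : Set V) (hdisj : Disjoint S₁ S₂)
    (h1 : (G.induce S₁).Connected) (h2 : (G.induce S₂).Connected)
    (hc1 : TwoVertexConnected (collapse G S₁))
    (hc2 : TwoVertexConnected (collapse G S₂)) :
    TwoVertexConnected G := by
  refine ⟨hG, fun v => ?_⟩
  by_cases hv : v ∈ S₁
  · exact connected_induce_ne_of_collapse G h2 (hdisj.notMem_of_mem_left hv) (hc2.2 _)
  · exact connected_induce_ne_of_collapse G h1 hv (hc1.2 _)
end

section
/- Let T be a simplicial tree on which a group G acts with finite edge stabilisers, let β be a biinfinite arc in T with setwise stabiliser H ≤ G such that the quotient of the edge set of β by H is finite. Then for every edge e of T, the set of G-translates gβ of β containing e is finite. -/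
theorem stmt9 {G V : Type*} [Group G] [MulAction G V]
    (T : SimpleGraph V) (hT : T.IsTree)
    (hact : ∀ (g : G) (x y : V), T.Adj x y → T.Adj (g • x) (g • y))
    (hstab : ∀ e ∈ T.edgeSet, {g : G | Sym2.map (fun v => g • v) e = e}.Finite)
    (b : ℤ → V) (hbinj : Function.Injective b)
    (hbadj : ∀ n : ℤ, T.Adj (b n) (b (n + 1)))
    (Eβ : Set (Sym2 V)) (hEβ : Eβ = {e : Sym2 V | ∃ n : ℤ, e = s(b n, b (n + 1))})
    (H : Set G) (hH : H = {g : G | (fun e => Sym2.map (fun v => g • v) e) '' Eβ = Eβ})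
    (hHquot : ∃ F : Finset (Sym2 V), ∀ e ∈ Eβ, ∃ h ∈ H, Sym2.map (fun v => h • v) e ∈ F) :
    ∀ e : Sym2 V,
      {A : Set (Sym2 V) | ∃ g : G,
        A = (fun e' => Sym2.map (fun v => g • v) e') '' Eβ ∧ e ∈ A}.Finite := by
  classical
  -- notation
  set φ : G → Sym2 V → Sym2 V := fun g x => Sym2.map (fun v => g • v) x with hφ
  have comp : ∀ (g g' : G) (x : Sym2 V), φ g (φ g' x) = φ (g * g') x := by
    intro g g' x
    simp only [hφ, Sym2.map_map]
    congr 1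
    funext v
    simp [mul_smul]
  have φone : ∀ x : Sym2 V, φ 1 x = x := by
    intro x; simp [hφ]
  have imcomp : ∀ (g g' : G), φ g '' (φ g' '' Eβ) = φ (g * g') '' Eβ := by
    intro g g'
    rw [← Set.image_comp]
    exact Set.image_congr (fun x _ => comp g g' x)
  have edgeP : ∀ (g : G) (x : Sym2 V), x ∈ T.edgeSet → φ g x ∈ T.edgeSet := by
    intro g x
    induction x using Sym2.ind with
    | _ a c =>
      intro hx
      simpa [hφ, SimpleGraph.mem_edgeSet] using hact g a c hx
  have hEedge : ∀ x ∈ Eβ, x ∈ T.edgeSet := by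
    intro x hx
    rw [hEβ] at hx
    obtain ⟨n, rfl⟩ := hx
    simpa [SimpleGraph.mem_edgeSet] using hbadj n
  have hHinv : ∀ h ∈ H, φ h⁻¹ '' Eβ = Eβ := by
    intro h hh
    rw [hH] at hh
    conv_lhs => rw [← hh]
    rw [imcomp]
    simp only [inv_mul_cancel]
    rw [Set.image_congr (fun x _ => φone x)]
    exact Set.image_id' Eβ
  obtain ⟨F, hF⟩ := hHquot
  intro e
  -- parametrizing set
  set P : Set G := {g : G | ∃ f ∈ F, f ∈ T.edgeSet ∧ φ g f = e} with hP
  have hPfin : P.Finite := by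
    have : P ⊆ ⋃ f ∈ F, {g : G | f ∈ T.edgeSet ∧ φ g f = e} := by
      intro g hg
      obtain ⟨f, hf, hfe, hgf⟩ := hg
      exact Set.mem_biUnion hf ⟨hfe, hgf⟩
    refine Set.Finite.subset ?_ this
    refine Set.Finite.biUnion F.finite_toSet ?_
    intro f _
    by_cases hfe : f ∈ T.edgeSet
    · by_cases hne : ∃ g₀ : G, φ g₀ f = e
      · obtain ⟨g₀, hg₀⟩ := hne
        have hsub : {g : G | f ∈ T.edgeSet ∧ φ g f = e} ⊆
            (fun k => g₀ * k) '' {k : G | φ k f = f} := by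
          intro g hg
          refine ⟨g₀⁻¹ * g, ?_, by group⟩
          show φ (g₀⁻¹ * g) f = f
          have : φ (g₀⁻¹ * g) f = φ g₀⁻¹ (φ g f) := (comp g₀⁻¹ g f).symm
          rw [this, hg.2, ← hg₀, comp]
          simpa using φone f
        exact Set.Finite.subset (Set.Finite.image _ (hstab f hfe)) hsub
      · have : {g : G | f ∈ T.edgeSet ∧ φ g f = e} = ∅ := by
          ext g; simp only [Set.mem_setOf_eq, Set.mem_empty_iff_false, iff_false]
          rintro ⟨_, hgf⟩; exact hne ⟨g, hgf⟩
        rw [this]; exact Set.finite_empty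
    · have : {g : G | f ∈ T.edgeSet ∧ φ g f = e} = ∅ := by
        ext g; simp only [Set.mem_setOf_eq, Set.mem_empty_iff_false, iff_false]
        rintro ⟨h, _⟩; exact hfe h
      rw [this]; exact Set.finite_empty
  -- the set of translates containing e is covered by the image of P
  have hsub : {A : Set (Sym2 V) | ∃ g : G,
      A = (fun e' => Sym2.map (fun v => g • v) e') '' Eβ ∧ e ∈ A} ⊆
      (fun g : G => φ g '' Eβ) '' P := by
    rintro A ⟨g, rfl, heA⟩
    obtain ⟨e₀, he₀, he₀e⟩ := heA
    obtain ⟨h, hh, hhF⟩ := hF e₀ he₀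
    refine ⟨g * h⁻¹, ⟨φ h e₀, hhF, edgeP h e₀ (hEedge e₀ he₀), ?_⟩, ?_⟩
    · rw [comp]
      have : g * h⁻¹ * h = g := by group
      rw [this]
      exact he₀e
    · show φ (g * h⁻¹) '' Eβ = φ g '' Eβ
      rw [← imcomp g h⁻¹, hHinv h hh]
  exact Set.Finite.subset (Set.Finite.image _ hPfin) hsub
end

section
/- Let T be a tree, R ⊆ S bounded subtrees, and ℬ an arc system on T. Let 𝒲(S) be the partition pieces (vertex sets of Whitehead-graph components) of V(S) and similarly 𝒲(R). If W ∈ 𝒲(S) satisfies W ⊆ V(R) and W ∩ π_R(V(S) \ V(R)) = ∅, then W ∈ 𝒲(R). -/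
/- Abstract setting: `B` is the boundary `∂T` of the tree, `pS = π_S` and `pR = π_R`
are the nearest-point projections of ends to the bounded subtrees `S` and `R`
(with vertex sets `VS` and `VR`, `VR ⊆ VS`), `q` is the restriction of `π_R` to
the tree (so `π_R = q ∘ π_S`, `q` fixes `VR` pointwise and maps `VS` into `VR`).
`sS = ∼_S` and `sR = ∼_R` are the equivalence relations on the boundary; `∼_S`
contains the kernel of `π_S`, and `∼_R` is generated by `∼_S` together with the
kernel of `π_R`.  The elements of `𝒲(S)` are the sets `π_S(Q)` for `Q` a
`∼_S`-class, and similarly for `𝒲(R)`. -/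
theorem stmt15 {B V : Type*} (pS pR : B → V) (VS VR : Set V) (hVRS : VR ⊆ VS)
    (hpS : ∀ b : B, pS b ∈ VS) (hpR : ∀ b : B, pR b ∈ VR)
    (q : V → V) (hqfix : ∀ v ∈ VR, q v = v) (hq : ∀ b : B, pR b = q (pS b))
    (hqVS : ∀ v ∈ VS, q v ∈ VR)
    (sS sR : Setoid B)
    (hker : ∀ x y : B, pS x = pS y → sS.r x y)
    (hsR : ∀ x y : B, sR.r x y ↔
      Relation.EqvGen (fun a b : B => sS.r a b ∨ pR a = pR b) x y)
    (Wset : Set V) (b0 : B) (hW : Wset = pS '' {x : B | sS.r x b0})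
    (hWR : Wset ⊆ VR) (hWdisj : Wset ∩ (q '' (VS \ VR)) = ∅) :
    ∃ b1 : B, Wset = pR '' {x : B | sR.r x b1} := by
  -- on the sS-class of b0, pR = pS
  have hfix : ∀ x : B, sS.r x b0 → pR x = pS x := by
    intro x hx
    have hmem : pS x ∈ Wset := hW ▸ ⟨x, hx, rfl⟩
    have hxR : pS x ∈ VR := hWR hmem
    rw [hq, hqfix _ hxR]
  -- key: if pR x = pR y and sS.r y b0 then sS.r x b0
  have key : ∀ x y : B, pR x = pR y → sS.r y b0 → sS.r x b0 := by
    intro x y hxy hy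
    have hymem : pS y ∈ Wset := hW ▸ ⟨y, hy, rfl⟩
    have hyfix : pR y = pS y := hfix y hy
    by_cases hxR : pS x ∈ VR
    · have : pR x = pS x := by rw [hq, hqfix _ hxR]
      exact sS.trans (hker x y (by rw [← this, hxy, hyfix])) hy
    · exfalso
      have himg : pR x ∈ q '' (VS \ VR) := ⟨pS x, ⟨hpS x, hxR⟩, (hq x).symm⟩
      have hmem : pR x ∈ Wset := by rw [hxy, hyfix]; exact hymem
      have : pR x ∈ Wset ∩ (q '' (VS \ VR)) := ⟨hmem, himg⟩
      rw [hWdisj] at this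
      exact this
  -- sR-class of b0 coincides with sS-class of b0
  have hiff : ∀ x y : B,
      Relation.EqvGen (fun a b : B => sS.r a b ∨ pR a = pR b) x y →
      (sS.r x b0 ↔ sS.r y b0) := by
    intro x y h
    induction h with
    | rel a b hab =>
        rcases hab with h | h
        · exact ⟨fun ha => sS.trans (sS.symm h) ha, fun hb => sS.trans h hb⟩
        · exact ⟨key b a h.symm, key a b h⟩
    | refl a => exact Iff.rfl
    | symm a b _ ih => exact ih.symm
    | trans a b c _ _ ih1 ih2 => exact ih1.trans ih2
  refine ⟨b0, Set.Subset.antisymm ?_ ?_⟩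
  · intro v hv
    rw [hW] at hv
    obtain ⟨x, hx, rfl⟩ := hv
    refine ⟨x, ?_, (hfix x hx)⟩
    exact (hsR x b0).mpr (Relation.EqvGen.rel _ _ (Or.inl hx))
  · rintro v ⟨x, hx, rfl⟩
    have hxS : sS.r x b0 := (hiff x b0 ((hsR x b0).mp hx)).mpr (sS.refl b0)
    rw [hfix x hxS, hW]
    exact ⟨x, hxS, rfl⟩
end

section
/- Let M be a compact Hausdorff space, Ψ ⊆ M a closed subset whose topological frontier in M is a two-point set {a, b}, with Ψ ≠ {a, b}. If M is connected, then every connected component of Ψ contains a or b. -/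
theorem stmt18 {M : Type*} [TopologicalSpace M] [CompactSpace M] [T2Space M]
    [ConnectedSpace M] (Ψ : Set M) (hΨ : IsClosed Ψ)
    (a b : M) (hab : a ≠ b) (ha : a ∈ Ψ) (hb : b ∈ Ψ)
    (hfr : frontier Ψ = {a, b}) (hne : Ψ ≠ {a, b}) :
    ∀ x ∈ Ψ, a ∈ connectedComponentIn Ψ x ∨ b ∈ connectedComponentIn Ψ x := by
  intro x hx
  by_contra h
  push_neg at h
  obtain ⟨hA, hB⟩ := h
  haveI : CompactSpace Ψ := isCompact_iff_compactSpace.mp (hΨ.isCompact)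
  set x' : Ψ := ⟨x, hx⟩
  have hcc : connectedComponentIn Ψ x = (↑) '' connectedComponent x' :=
    connectedComponentIn_eq_image hx
  -- the open set in Ψ avoiding a and b
  set U : Set Ψ := (↑) ⁻¹' ({a, b}ᶜ : Set M) with hU
  have hUopen : IsOpen U := ((Set.toFinite ({a, b} : Set M)).isClosed.isOpen_compl).preimage continuous_subtype_val
  have hccU : connectedComponent x' ⊆ U := by
    intro y hy
    simp only [hU, Set.mem_preimage, Set.mem_compl_iff, Set.mem_insert_iff,
      Set.mem_singleton_iff]
    push_neg
    constructor
    · rintro rfl; exact hA (hcc ▸ ⟨y, hy, rfl⟩)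
    · rintro rfl; exact hB (hcc ▸ ⟨y, hy, rfl⟩)
  -- find a clopen set between the component and U
  have key := connectedComponent_eq_iInter_isClopen x'
  haveI : Nonempty { s : Set Ψ // IsClopen s ∧ x' ∈ s } :=
    ⟨⟨Set.univ, isClopen_univ, trivial⟩⟩
  obtain ⟨⟨s, hs, hxs⟩, hsU⟩ :=
    exists_subset_nhds_of_compactSpace
      (V := fun s : { s : Set Ψ // IsClopen s ∧ x' ∈ s } => (s : Set Ψ))
      (fun i j => ⟨⟨i.1 ∩ j.1, i.2.1.inter j.2.1, i.2.2, j.2.2⟩,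
        Set.inter_subset_left, Set.inter_subset_right⟩)
      (fun i => i.2.1.isClosed)
      (fun y hy => hUopen.mem_nhds (hccU (key ▸ hy)))
  -- L is clopen in M
  set L : Set M := (↑) '' s with hL
  have hLsub : L ⊆ Ψ := by rintro _ ⟨y, _, rfl⟩; exact y.2
  have hLab : ∀ y ∈ L, y ≠ a ∧ y ≠ b := by
    rintro _ ⟨y, hy, rfl⟩
    have := hsU hy
    simp only [hU, Set.mem_preimage, Set.mem_compl_iff, Set.mem_insert_iff,
      Set.mem_singleton_iff] at this
    push_neg at this
    exact this
  have hLclosed : IsClosed L :=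
    (hs.isClosed.isCompact.image continuous_subtype_val).isClosed
  have hLint : L ⊆ interior Ψ := by
    intro y hy
    have hyΨ : y ∈ Ψ := hLsub hy
    have : y ∉ frontier Ψ := by
      rw [hfr]
      rintro (rfl | rfl)
      · exact (hLab _ hy).1 rfl
      · exact (hLab _ hy).2 rfl
    rw [frontier, hΨ.closure_eq] at this
    simpa [hyΨ] using this
  have hLopen : IsOpen L := by
    obtain ⟨V, hVopen, hV⟩ := isOpen_induced_iff.mp hs.isOpen
    have : L = interior Ψ ∩ V := by
      apply Set.Subset.antisymm
      · intro y hy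
        refine ⟨hLint hy, ?_⟩
        obtain ⟨z, hz, rfl⟩ := hy
        rw [← hV] at hz; exact hz
      · rintro y ⟨hy1, hy2⟩
        have hyΨ : y ∈ Ψ := interior_subset hy1
        exact ⟨⟨y, hyΨ⟩, by rw [← hV]; exact hy2, rfl⟩
    rw [this]
    exact isOpen_interior.inter hVopen
  have := isClopen_iff.mp ⟨hLclosed, hLopen⟩
  rcases this with h1 | h1
  · exact absurd (h1 ▸ ⟨x', hxs, rfl⟩ : x ∈ (∅ : Set M)) (Set.notMem_empty x)
  · exact (hLab a (h1 ▸ Set.mem_univ a)).1 rfl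
end

section
/- Let T be a simplicial tree with a cocompact action of a group G (finitely many orbits of edges), and let ℬ be a G-invariant arc system on T consisting of finitely many G-orbits of biinfinite arcs, such that the setwise stabiliser in G of each arc acts on that arc with finite edge-quotient, and all edge stabilisers of T are finite. Then ℬ is edge-finite: every edge of T lies in only finitely many arcs of ℬ. -/
private lemma sm_mul {G V : Type*} [Group G] [MulAction G V] (g h : G) (x : Sym2 V) :
    Sym2.map (fun v => (g * h) • v) x
      = Sym2.map (fun v => g • v) (Sym2.map (fun v => h • v) x) := by
  rw [Sym2.map_map]
  simp [mul_smul, Function.comp]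

private lemma sm_inv_image {G V : Type*} [Group G] [MulAction G V] (k : G) (A : Set (Sym2 V)) :
    (fun x => Sym2.map (fun v => k⁻¹ • v) x) ''
      ((fun x => Sym2.map (fun v => k • v) x) '' A) = A := by
  rw [Set.image_image]
  have h : ∀ x : Sym2 V, Sym2.map (fun v => k⁻¹ • v) (Sym2.map (fun v => k • v) x) = x := by
    intro x
    rw [← sm_mul]
    simp
  simp only [h, Set.image_id']

theorem stmt19 {G V : Type*} [Group G] [MulAction G V]
    (T : SimpleGraph V) (hT : T.IsTree)
    (hact : ∀ (g : G) (x y : V), T.Adj x y → T.Adj (g • x) (g • y))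
    (hcofin : ∃ F : Finset (Sym2 V), ∀ e ∈ T.edgeSet, ∃ g : G, Sym2.map (fun v => g • v) e ∈ F)
    (hstab : ∀ e ∈ T.edgeSet, {g : G | Sym2.map (fun v => g • v) e = e}.Finite)
    (ℬ : Set (Set (Sym2 V)))
    (harc : ∀ A ∈ ℬ, ∃ b : ℤ → V, Function.Injective b ∧
      (∀ n : ℤ, T.Adj (b n) (b (n + 1))) ∧ A = {e : Sym2 V | ∃ n : ℤ, e = s(b n, b (n + 1))})
    (hinv : ∀ (g : G), ∀ A ∈ ℬ, (fun e => Sym2.map (fun v => g • v) e) '' A ∈ ℬ)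
    (hBfin : ∃ F : Finset (Set (Sym2 V)), ∀ A ∈ ℬ, ∃ g : G,
      (fun e => Sym2.map (fun v => g • v) e) '' A ∈ F)
    (hHquot : ∀ A ∈ ℬ, ∃ F : Finset (Sym2 V), ∀ e ∈ A, ∃ h : G,
      (fun e' => Sym2.map (fun v => h • v) e') '' A = A ∧ Sym2.map (fun v => h • v) e ∈ F) :
    ∀ e : Sym2 V, {A : Set (Sym2 V) | A ∈ ℬ ∧ e ∈ A}.Finite := by
  classical
  intro e
  by_cases he : e ∈ T.edgeSet
  · choose FR hFR using hHquot
    obtain ⟨F, hF⟩ := hBfin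
    set F' : Finset (Sym2 V) :=
      F.biUnion (fun R => if hR : R ∈ ℬ then FR R hR else ∅) with hF'def
    -- the set of group elements moving e into F' is finite
    have hS : {k : G | Sym2.map (fun v => k • v) e ∈ F'}.Finite := by
      have hsub : {k : G | Sym2.map (fun v => k • v) e ∈ F'} ⊆
          ⋃ e' ∈ (F' : Finset (Sym2 V)), {k : G | Sym2.map (fun v => k • v) e = e'} := by
        intro k hk
        exact Set.mem_biUnion hk rfl
      refine Set.Finite.subset (Set.Finite.biUnion F'.finite_toSet fun e' _ => ?_) hsub
      rcases Set.eq_empty_or_nonempty {k : G | Sym2.map (fun v => k • v) e = e'} with h | ⟨k₀, hk₀⟩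
      · simp [h]
      · have hsub2 : {k : G | Sym2.map (fun v => k • v) e = e'} ⊆
            (fun t => k₀ * t) '' {g : G | Sym2.map (fun v => g • v) e = e} := by
          intro k hk
          refine ⟨k₀⁻¹ * k, ?_, by group⟩
          show Sym2.map (fun v => (k₀⁻¹ * k) • v) e = e
          rw [sm_mul, hk, ← hk₀, ← sm_mul]
          simp
        exact Set.Finite.subset ((hstab e he).image _) hsub2
    have key : {A : Set (Sym2 V) | A ∈ ℬ ∧ e ∈ A} ⊆
        (fun p : G × Set (Sym2 V) => (fun x => Sym2.map (fun v => p.1⁻¹ • v) x) '' p.2) ''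
          ({k : G | Sym2.map (fun v => k • v) e ∈ F'} ×ˢ (F : Set (Set (Sym2 V)))) := by
      rintro A ⟨hA, heA⟩
      obtain ⟨g, hgF⟩ := hF A hA
      have hR : (fun x => Sym2.map (fun v => g • v) x) '' A ∈ ℬ := hinv g A hA
      have he' : Sym2.map (fun v => g • v) e ∈ (fun x => Sym2.map (fun v => g • v) x) '' A :=
        ⟨e, heA, rfl⟩
      obtain ⟨h, hhR, hhe⟩ := hFR _ hR _ he'
      have hkA : (fun x => Sym2.map (fun v => (h * g) • v) x) '' A
          = (fun x => Sym2.map (fun v => g • v) x) '' A := by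
        have : (fun x => Sym2.map (fun v => (h * g) • v) x) '' A
            = (fun x => Sym2.map (fun v => h • v) x) ''
                ((fun x => Sym2.map (fun v => g • v) x) '' A) := by
          rw [Set.image_image]
          exact Set.image_congr fun x _ => sm_mul h g x
        rw [this, hhR]
      refine ⟨(h * g, (fun x => Sym2.map (fun v => g • v) x) '' A), ⟨?_, hgF⟩, ?_⟩
      · show Sym2.map (fun v => (h * g) • v) e ∈ F'
        rw [sm_mul]
        refine Finset.mem_biUnion.2 ⟨_, hgF, ?_⟩
        rw [dif_pos hR]
        exact hhe
      · show (fun x => Sym2.map (fun v => (h * g)⁻¹ • v) x) ''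
            ((fun x => Sym2.map (fun v => g • v) x) '' A) = A
        rw [← hkA]
        exact sm_inv_image (h * g) A
    exact Set.Finite.subset (Set.Finite.image _ (hS.prod F.finite_toSet)) key
  · have : {A : Set (Sym2 V) | A ∈ ℬ ∧ e ∈ A} = ∅ := by
      ext A
      simp only [Set.mem_setOf_eq, Set.mem_empty_iff_false, iff_false, not_and]
      intro hA heA
      obtain ⟨b, -, hadj, rfl⟩ := harc A hA
      obtain ⟨n, rfl⟩ := heA
      exact he (hadj n)
    rw [this]
    exact Set.finite_empty
end
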